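/- arXiv:1203.2090 — 2 statements merged into one kernel-verified Lean document; each statement's English description precedes it below -/
import Mathlib

section
/- There do not exist distinct nonnegative integers n and m and a positive integer k such that ⌊φn⌋ - k = ⌊φm⌋ and ⌊φ²n⌋ - k = ⌊φ²m⌋, where φ = (1+√5)/2. -/
noncomputable def phi : ℝ := (1 + Real.sqrt 5) / 2

noncomputable def fl (n : ℕ) : ℕ := ⌊phi * n⌋₊
noncomputable def fl2 (n : ℕ) : ℕ := ⌊phi ^ 2 * n⌋₊

open Real goldenRatio

lemma phi_eq_goldenRatio : phi = φ := rfl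

lemma Nat.floor_add_one_mul_natCast {R : Type*} [Semiring R] [LinearOrder R]
    [IsStrictOrderedRing R] [FloorSemiring R] {x : R} (hx : 0 ≤ x) (n : ℕ) :
    ⌊(x + 1) * n⌋₊ = ⌊x * n⌋₊ + n := by
  rw [_root_.add_one_mul, Nat.floor_add_natCast (by positivity)]

lemma fl2_eq_fl_add (n : ℕ) : fl2 n = fl n + n := by
  rw [fl2, fl, phi_eq_goldenRatio, goldenRatio_sq,
    Nat.floor_add_one_mul_natCast goldenRatio_pos.le]

theorem stmt8 :
    ¬∃ (n m k : ℕ), n ≠ m ∧ 1 ≤ k ∧ (fl n : ℤ) - k = fl m ∧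
      (fl2 n : ℤ) - k = fl2 m := by
  rintro ⟨n, m, k, hnm, -, hfl, hfl2⟩
  rw [fl2_eq_fl_add, fl2_eq_fl_add] at hfl2
  push_cast at hfl2
  omega
end

section
/- In F-Wythoff, for every nonnegative integer a and every nonnegative integer g, there exists a unique nonnegative integer b such that the Sprague-Grundy value of position (a,b) equals g. -/
def FMove (p q : ℕ × ℕ) : Prop :=
  ∃ a b x y : ℕ, a ≤ b ∧ x ≤ y ∧ (p = (a, b) ∨ p = (b, a)) ∧ (q = (x, y) ∨ q = (y, x)) ∧
    ((x = a ∧ y < b) ∨ (x < a ∧ y = b) ∨ (x < a ∧ y = a) ∨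
      (∃ k, 1 ≤ k ∧ k < a ∧ (b - k) / (a - k) = b / a ∧ x = a - k ∧ y = b - k))

theorem fMove_lt {p q : ℕ × ℕ} (h : FMove p q) : q.1 + q.2 < p.1 + p.2 := by
  obtain ⟨a, b, x, y, hab, hxy, hp, hq, hc⟩ := h
  have hps : p.1 + p.2 = a + b := by rcases hp with h | h <;> subst h <;> simp <;> omega
  have hqs : q.1 + q.2 = x + y := by rcases hq with h | h <;> subst h <;> simp <;> omega
  rw [hps, hqs]
  rcases hc with ⟨h1, h2⟩ | ⟨h1, h2⟩ | ⟨h1, h2⟩ | ⟨k, hk1, hk2, _, h1, h2⟩ <;> omega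

def PPos (p : ℕ × ℕ) : Prop := ∀ q, FMove p q → ¬ PPos q
termination_by p.1 + p.2
decreasing_by exact fMove_lt (by assumption)

noncomputable def grundy (p : ℕ × ℕ) : ℕ :=
  sInf {g : ℕ | ∀ q, FMove p q → grundy q ≠ g}
termination_by p.1 + p.2
decreasing_by exact fMove_lt (by assumption)

lemma fMove_swap_iff {a b : ℕ} {q : ℕ × ℕ} : FMove (a, b) q ↔ FMove (b, a) q := by
  constructor <;>
  · rintro ⟨a', b', x, y, h1, h2, h3, h4, h5⟩
    refine ⟨a', b', x, y, h1, h2, ?_, h4, h5⟩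
    rcases h3 with h | h <;> rw [Prod.mk.injEq] at h <;> simp [Prod.mk.injEq] <;> omega

lemma grundy_swap (a b : ℕ) : grundy (b, a) = grundy (a, b) := by
  rw [grundy, grundy]
  simp_rw [fMove_swap_iff (a := b)]

lemma fMove_of_le {a b : ℕ} {q : ℕ × ℕ} (h : FMove (a, b) q) (hab : a ≤ b) :
    ∃ x y, (q = (x, y) ∨ q = (y, x)) ∧ ((x = a ∧ y < b) ∨ (x < a ∧ y = b) ∨ (x < a ∧ y = a) ∨
      ∃ k, 0 < k ∧ k < a ∧ x = a - k ∧ y = b - k) := by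
  obtain ⟨a', b', x, y, hab', -, hp, hq, hc⟩ := h
  obtain ⟨rfl, rfl⟩ : a' = a ∧ b' = b := by
    rcases hp with h | h <;> rw [Prod.mk.injEq] at h <;> omega
  refine ⟨x, y, hq, ?_⟩
  rcases hc with hc | hc | hc | ⟨k, hk, hka, -, hc⟩
  exacts [Or.inl hc, Or.inr (Or.inl hc), Or.inr (Or.inr (Or.inl hc)),
    Or.inr (Or.inr (Or.inr ⟨k, hk, hka, hc⟩))]

lemma setOf_fMove_finite (p : ℕ × ℕ) : {q | FMove p q}.Finite := by
  refine ((Set.finite_Iio (p.1 + p.2)).prod (Set.finite_Iio (p.1 + p.2))).subset fun q hq => ?_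
  have := fMove_lt hq
  constructor <;> simp only [Set.mem_Iio] <;> omega

lemma grundy_ne_of_fMove {p q : ℕ × ℕ} (h : FMove p q) : grundy q ≠ grundy p := by
  obtain ⟨g, hg⟩ := ((setOf_fMove_finite p).image grundy).infinite_compl.nonempty
  have hmex : grundy p ∈ {g : ℕ | ∀ q, FMove p q → grundy q ≠ g} := by
    rw [grundy]
    exact Nat.sInf_mem ⟨g, fun q hq he => hg ⟨q, hq, he⟩⟩
  exact hmex q h

lemma grundy_le_of_forall_fMove_ne {p : ℕ × ℕ} {g : ℕ} (h : ∀ q, FMove p q → grundy q ≠ g) :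
    grundy p ≤ g := by
  rw [grundy]
  exact Nat.sInf_le h

lemma fMove_of_snd_lt {a b b' : ℕ} (h : b' < b) : FMove (a, b) (a, b') := by
  rcases le_or_gt a b with hab | hab
  · rcases le_or_gt a b' with h1 | h1
    · exact ⟨a, b, a, b', hab, h1, Or.inl rfl, Or.inl rfl, Or.inl ⟨rfl, h⟩⟩
    · exact ⟨a, b, b', a, hab, h1.le, Or.inl rfl, Or.inr rfl,
        Or.inr (Or.inr (Or.inl ⟨h1, rfl⟩))⟩
  · exact ⟨b, a, b', a, hab.le, (h.trans hab).le, Or.inr rfl, Or.inr rfl,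
      Or.inr (Or.inl ⟨h, rfl⟩)⟩

lemma grundy_injective_snd (a : ℕ) : Function.Injective fun b => grundy (a, b) := by
  intro b b' he
  by_contra hne
  rcases Nat.lt_or_gt_of_ne hne with hlt | hlt
  · exact grundy_ne_of_fMove (fMove_of_snd_lt hlt) he
  · exact grundy_ne_of_fMove (fMove_of_snd_lt hlt) he.symm

lemma grundy_lt_of_row_avoids {a b g : ℕ} (hrow : ∀ y, grundy (a, y) ≠ g) (hab : a ≤ b)
    (hlower : ∀ x < a, ∀ y, grundy (x, y) = g → b ≠ y ∧ b ≠ y + (a - x)) :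
    grundy (a, b) < g := by
  refine lt_of_le_of_ne (grundy_le_of_forall_fMove_ne fun q hq hqg => ?_) (hrow b)
  obtain ⟨x, y, hq', hc⟩ := fMove_of_le hq hab
  have hxy : grundy (x, y) = g := by
    rcases hq' with rfl | rfl
    exacts [hqg, (grundy_swap x y).symm.trans hqg]
  rcases hc with ⟨rfl, -⟩ | ⟨hx, rfl⟩ | ⟨hx, rfl⟩ | ⟨k, hk, hka, hx, hy⟩
  · exact hrow y hxy
  · exact (hlower x hx y hxy).1 rfl
  · exact hrow x ((grundy_swap _ _).trans hxy)
  · exact (hlower x (by omega) y hxy).2 (by omega)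

lemma exists_grundy_eq (a g : ℕ) : ∃ b, grundy (a, b) = g := by
  by_contra! hrow
  set hits : ℕ → Set ℕ := fun x => {y | grundy (x, y) = g}
  set bad : Set ℕ := ⋃ x ∈ Set.Iio a, hits x ∪ (· + (a - x)) '' hits x
  have hbad : bad.Finite := by
    refine (Set.finite_Iio a).biUnion fun x _ => ?_
    have hx : (hits x).Finite := (Set.finite_singleton g).preimage (grundy_injective_snd x).injOn
    exact hx.union (hx.image _)
  have hgood : (Set.Ici a \ bad).Infinite := (Set.Ici_infinite a).sdiff hbad
  refine (Set.finite_Iio g).not_infinite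
    (Set.infinite_of_injOn_mapsTo (grundy_injective_snd a).injOn ?_ hgood)
  rintro b ⟨hab, hb⟩
  refine grundy_lt_of_row_avoids hrow hab fun x hx y hy => ⟨?_, ?_⟩ <;> rintro rfl <;>
    exact hb (Set.mem_biUnion hx (by simp [hits, hy]))

theorem stmt16 (a g : ℕ) : ∃! b : ℕ, grundy (a, b) = g := by
  obtain ⟨b, hb⟩ := exists_grundy_eq a g
  exact ⟨b, hb, fun b' hb' => grundy_injective_snd a (hb'.trans hb.symm)⟩
end
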